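/- arXiv:1802.03642 — 5 statements merged into one kernel-verified Lean document; each statement's English description precedes it below -/
import Mathlib

section
/- Let u : ℕ → ℝ be a utility sequence with |u_{t+1} − u_t| ≤ W for all t for some constant W, and let T ∈ ℕ. For every stopping-time distribution δ with expected time 𝔼_δ = T, there exists a stopping-time distribution δ' with 𝔼_{δ'} = T such that the support of δ' contains at most one point in the interval [0, T−1] and 𝔼_{δ'}(u) ≤ 𝔼_δ(u). -/
open scoped BigOperators

/-- A stopping-time distribution: pointwise nonnegative, total mass `1`,
with absolutely convergent expected time. -/
def IsStopDist (δ : ℕ → ℝ) : Prop :=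
  (∀ t, 0 ≤ δ t) ∧ Summable δ ∧ (∑' t, δ t) = 1 ∧
    Summable (fun t : ℕ => (t : ℝ) * δ t)

/-- The expected (stopping) time of `δ`. -/
noncomputable def expTime (δ : ℕ → ℝ) : ℝ := ∑' t : ℕ, (t : ℝ) * δ t

/-- The expected utility of the utility sequence `u` under `δ`. -/
noncomputable def expUtil (u δ : ℕ → ℝ) : ℝ := ∑' t : ℕ, u t * δ t

/-- The value of a utility sequence `u` under adversarial stopping-time
distributions with expected time `T`:
`val u T = inf { 𝔼_δ(u) | δ a stopping-time distribution with 𝔼_δ = T }`. -/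
noncomputable def val (u : ℕ → ℝ) (T : ℕ) : ℝ :=
  sInf {x | ∃ δ : ℕ → ℝ, IsStopDist δ ∧ (Summable fun t => u t * δ t) ∧
    expTime δ = (T : ℝ) ∧ x = expUtil u δ}

/-!
Write `c = 𝔼_δ(u)`. Among the lines through `(T, c)`, take the one `ℓ` of least slope that stays below
`u` on `[0, T-1]`; it touches `u` at some `a < T`. Since `δ` has mean `T`, the line integrates to
`c` against `δ`, and `δ` charges some point `≥ T`; so `ℓ` cannot lie strictly below `u` on all of
`[T, ∞)`, i.e. `u b ≤ ℓ b` for some `b ≥ T`. The distribution on `{a, b}` with mean `T` then has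
expected utility at most `ℓ(T) = c`.
-/

theorem exists_line_le_touching (u : ℕ → ℝ) (c : ℝ) {T : ℕ} (hT : 0 < T) :
    ∃ k : ℝ, ∃ a < T, u a = c + k * (a - T) ∧ ∀ t < T, c + k * ((t : ℝ) - T) ≤ u t := by
  obtain ⟨a, haT, hmax⟩ := Finset.exists_max_image (Finset.range T)
    (fun t : ℕ => (c - u t) / ((T : ℝ) - t)) ⟨0, Finset.mem_range.mpr hT⟩
  have hpos : ∀ t < T, (0 : ℝ) < T - t := fun t ht => sub_pos.mpr (by exact_mod_cast ht)
  have haT : a < T := Finset.mem_range.mp haT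
  refine ⟨(c - u a) / (T - a), a, haT, ?_, fun t ht => ?_⟩
  · field_simp [(hpos a haT).ne']
    ring
  · have h := (div_le_iff₀ (hpos t ht)).1 (hmax t (Finset.mem_range.mpr ht))
    linarith

namespace IsStopDist

variable {δ : ℕ → ℝ}

theorem hasSum_line_mul (hδ : IsStopDist δ) (c k m : ℝ) :
    HasSum (fun t : ℕ => (c + k * ((t : ℝ) - m)) * δ t) (c + k * (expTime δ - m)) := by
  obtain ⟨-, hsum, hone, htime⟩ := hδ
  have h := (hsum.hasSum.mul_left (c - k * m)).add (htime.hasSum.mul_left k)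
  rw [hone, ← expTime, show (c - k * m) * 1 + k * expTime δ = c + k * (expTime δ - m) by ring] at h
  refine h.congr_fun fun t => ?_
  ring

theorem exists_expTime_le_and_pos (hδ : IsStopDist δ) : ∃ t : ℕ, expTime δ ≤ t ∧ 0 < δ t := by
  obtain ⟨hnonneg, hsum, hone, htime⟩ := hδ
  by_contra! h
  have hle : ∀ t : ℕ, (t : ℝ) * δ t ≤ expTime δ * δ t := fun t => by
    rcases lt_or_ge (t : ℝ) (expTime δ) with ht | ht
    · exact mul_le_mul_of_nonneg_right ht.le (hnonneg t)
    · simp [le_antisymm (h t ht) (hnonneg t)]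
  obtain ⟨t₀, ht₀⟩ : ∃ t₀, δ t₀ ≠ 0 := by
    by_contra! h0
    simp [funext h0] at hone
  have hpos := lt_of_le_of_ne (hnonneg t₀) (Ne.symm ht₀)
  have hlt : (t₀ : ℝ) < expTime δ := lt_of_not_ge fun h' => (h t₀ h').not_gt hpos
  have := htime.tsum_lt_tsum (i := t₀) hle (mul_lt_mul_of_pos_right hlt hpos) (hsum.mul_left _)
  rw [tsum_mul_left, hone, mul_one, ← expTime] at this
  exact lt_irrefl _ this

theorem exists_expTime_le_le_line (hδ : IsStopDist δ) {u : ℕ → ℝ}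
    (hδu : Summable fun t => u t * δ t) (k : ℝ)
    (hk : ∀ t : ℕ, (t : ℝ) < expTime δ → expUtil u δ + k * (t - expTime δ) ≤ u t) :
    ∃ b : ℕ, expTime δ ≤ b ∧ u b ≤ expUtil u δ + k * (b - expTime δ) := by
  by_contra! h
  obtain ⟨t₀, ht₀, hpos⟩ := hδ.exists_expTime_le_and_pos
  have hline := hδ.hasSum_line_mul (expUtil u δ) k (expTime δ)
  have hle : ∀ t : ℕ, (expUtil u δ + k * ((t : ℝ) - expTime δ)) * δ t ≤ u t * δ t := fun t =>
    mul_le_mul_of_nonneg_right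
      ((lt_or_ge (t : ℝ) (expTime δ)).elim (hk t) fun ht => (h t ht).le) (hδ.1 t)
  have := hline.summable.tsum_lt_tsum hle (mul_lt_mul_of_pos_right (h t₀ ht₀) hpos) hδu
  rw [hline.tsum_eq, sub_self, mul_zero, add_zero] at this
  exact lt_irrefl _ this

end IsStopDist

noncomputable def twoPoint (a b : ℕ) (p : ℝ) : ℕ → ℝ := Pi.single a (1 - p) + Pi.single b p

section TwoPoint

variable {a b : ℕ} {p : ℝ}

theorem hasSum_mul_twoPoint (f : ℕ → ℝ) :
    HasSum (fun t => f t * twoPoint a b p t) (f a * (1 - p) + f b * p) := by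
  simp only [twoPoint, Pi.add_apply, mul_add, ← Pi.single_mul_right_apply]
  exact (hasSum_pi_single a _).add (hasSum_pi_single b _)

theorem isStopDist_twoPoint (hp₀ : 0 ≤ p) (hp₁ : p ≤ 1) : IsStopDist (twoPoint a b p) := by
  have hmass := hasSum_mul_twoPoint (a := a) (b := b) (p := p) fun _ => 1
  simp only [one_mul] at hmass
  refine ⟨fun t => add_nonneg ?_ ?_, hmass.summable, by rw [hmass.tsum_eq]; ring,
    (hasSum_mul_twoPoint _).summable⟩ <;>
  · rw [Pi.single_apply]; split_ifs <;> linarith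

theorem expTime_twoPoint : expTime (twoPoint a b p) = a * (1 - p) + b * p :=
  (hasSum_mul_twoPoint _).tsum_eq

theorem expUtil_twoPoint (u : ℕ → ℝ) : expUtil u (twoPoint a b p) = u a * (1 - p) + u b * p :=
  (hasSum_mul_twoPoint u).tsum_eq

theorem subsingleton_support_twoPoint_lt {T : ℕ} (hb : T ≤ b) :
    {t : ℕ | twoPoint a b p t ≠ 0 ∧ t < T}.Subsingleton := by
  refine (Set.subsingleton_singleton (a := a)).anti fun t ⟨hne, ht⟩ => ?_
  by_contra hta
  exact hne (by simp [twoPoint, Set.mem_singleton_iff.not.mp hta, (ht.trans_le hb).ne])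

theorem exists_twoPoint_mean {m : ℝ} (hab : a < b) (ha : a ≤ m) (hb : m ≤ b) :
    ∃ p, 0 ≤ p ∧ p ≤ 1 ∧ (a : ℝ) * (1 - p) + b * p = m := by
  have hba : (0 : ℝ) < b - a := sub_pos.mpr (by exact_mod_cast hab)
  refine ⟨(m - a) / (b - a), by apply div_nonneg <;> linarith,
    (div_le_one hba).mpr (by linarith), ?_⟩
  field_simp
  ring

end TwoPoint

theorem one_point_before_T_suffices_general
    (u : ℕ → ℝ) (T : ℕ)
    (δ : ℕ → ℝ) (hδ : IsStopDist δ)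
    (hδu : Summable (fun t => u t * δ t))
    (hδT : expTime δ = (T : ℝ)) :
    ∃ δ' : ℕ → ℝ, IsStopDist δ' ∧ (Summable fun t => u t * δ' t) ∧
      expTime δ' = (T : ℝ) ∧
      {t : ℕ | δ' t ≠ 0 ∧ t < T}.Subsingleton ∧
      expUtil u δ' ≤ expUtil u δ := by
  rcases Nat.eq_zero_or_pos T with rfl | hT
  · exact ⟨δ, hδ, hδu, hδT, fun t ht => (Nat.not_lt_zero t ht.2).elim, le_rfl⟩
  set c := expUtil u δ
  obtain ⟨k, a, haT, hua, hk⟩ := exists_line_le_touching u c hT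
  obtain ⟨b, hTb, hub⟩ := hδ.exists_expTime_le_le_line hδu k (by
    rw [hδT]; exact fun t ht => hk t (by exact_mod_cast ht))
  rw [hδT] at hTb hub
  obtain ⟨p, hp₀, hp₁, hmean⟩ :=
    exists_twoPoint_mean (haT.trans_le (by exact_mod_cast hTb)) (by exact_mod_cast haT.le) hTb
  refine ⟨twoPoint a b p, isStopDist_twoPoint hp₀ hp₁, (hasSum_mul_twoPoint u).summable,
    expTime_twoPoint.trans hmean, subsingleton_support_twoPoint_lt (by exact_mod_cast hTb), ?_⟩
  have hq : 0 ≤ 1 - p := sub_nonneg.mpr hp₁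
  calc expUtil u (twoPoint a b p) = u a * (1 - p) + u b * p := expUtil_twoPoint u
    _ ≤ (c + k * (a - T)) * (1 - p) + (c + k * (b - T)) * p := by rw [hua]; gcongr
    _ = c + k * ((a * (1 - p) + b * p) - T) := by ring
    _ = c := by rw [hmean, sub_self, mul_zero, add_zero]

/-- One point before `T` in the support suffices: for every stopping-time
distribution `δ` with expected time `T`, there is a stopping-time distribution
`δ'` with expected time `T`, whose support contains at most one point in
`[0, T-1]`, and with expected utility at most that of `δ`. -/
theorem one_point_before_T_suffices
    (u : ℕ → ℝ) (W : ℝ) (hW : ∀ t, |u (t + 1) - u t| ≤ W) (T : ℕ)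
    (δ : ℕ → ℝ) (hδ : IsStopDist δ)
    (hδu : Summable (fun t => u t * δ t))
    (hδT : expTime δ = (T : ℝ)) :
    ∃ δ' : ℕ → ℝ, IsStopDist δ' ∧ (Summable fun t => u t * δ' t) ∧
      expTime δ' = (T : ℝ) ∧
      {t : ℕ | δ' t ≠ 0 ∧ t < T}.Subsingleton ∧
      expUtil u δ' ≤ expUtil u δ :=
  one_point_before_T_suffices_general u T δ hδ hδu hδT
end

section
/- Let u : ℕ → ℝ be a utility sequence with |u_{t+1} − u_t| ≤ W for all t for some constant W, and let T ∈ ℕ. Then there exists t_1 with 0 ≤ t_1 ≤ T such that, setting ν = inf_{t_2 ≥ T} (u_{t_2} − u_{t_1})/(t_2 − t_1) (assumed finite) and f_u(t) = u_{t_1} + (t − t_1)·ν: (1) u_t ≥ f_u(t) for all t ≥ 0, and (2) val(u,T) = f_u(T) = u_{t_1} + (T − t_1)·ν. Moreover val(u,T) = min_{0 ≤ t_1 ≤ T} inf_{t_2 ≥ T} ( u_{t_1}·(t_2 − T) + u_{t_2}·(T − t_1) ) / (t_2 − t_1). -/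
/-!
Every affine minorant `ℓ` of `u` gives `ℓ T ≤ 𝔼_δ(u)` for all admissible `δ`, by linearity of
expectation, while the two-point distributions on `s₁ ≤ T ≤ s₂` realise every chord value. So it
suffices to find `t₁ ≤ T` for which the line through `(t₁, u t₁)` of slope `slopeInf u T t₁` is a
minorant of `u`. Take `t₁` the largest minimiser of `s ↦ u s + (T - s) * slopeInf u T s` on
`s ≤ T`: a point `t < T` below that line forces every `u r`, `r ≥ T`, above it with a margin growing
linearly in `r - T`; this either contradicts the definition of `slopeInf u T t₁` or makes `T`
another minimiser.
-/

open scoped BigOperators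

/-- `slopeInf u T t₁ = inf_{t₂ ≥ T, t₂ > t₁} (u t₂ - u t₁)/(t₂ - t₁)`. -/
noncomputable def slopeInf (u : ℕ → ℝ) (T t₁ : ℕ) : ℝ :=
  sInf {x | ∃ t₂ : ℕ, T ≤ t₂ ∧ t₁ < t₂ ∧
    x = (u t₂ - u t₁) / ((t₂ : ℝ) - (t₁ : ℝ))}

noncomputable def supportLine (u : ℕ → ℝ) (T s : ℕ) (x : ℝ) : ℝ :=
  u s + (x - s) * slopeInf u T s

def valSet (u : ℕ → ℝ) (T : ℕ) : Set ℝ :=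
  {x | ∃ δ : ℕ → ℝ, IsStopDist δ ∧ (Summable fun t => u t * δ t) ∧
    expTime δ = (T : ℝ) ∧ x = expUtil u δ}

def chordSet (u : ℕ → ℝ) (T : ℕ) : Set ℝ :=
  {x | ∃ s₁ s₂ : ℕ, s₁ ≤ T ∧ T ≤ s₂ ∧
    ((s₁ = s₂ ∧ x = u T) ∨
      (s₁ < s₂ ∧
        x = (u s₁ * ((s₂ : ℝ) - (T : ℝ)) + u s₂ * ((T : ℝ) - (s₁ : ℝ))) /
              ((s₂ : ℝ) - (s₁ : ℝ))))}

section SupportLine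

variable {u : ℕ → ℝ} {W : ℝ} {T s : ℕ}

lemma sub_mul_le_of_abs_succ_sub_le (hW : ∀ t, |u (t + 1) - u t| ≤ W) {a b : ℕ} (hab : a ≤ b) :
    u a - W * ((b : ℝ) - a) ≤ u b := by
  induction b, hab using Nat.le_induction with
  | base => simp
  | succ n _ ih =>
    push_cast
    linarith [hW n, neg_abs_le (u (n + 1) - u n)]

lemma bddBelow_slopes (hW : ∀ t, |u (t + 1) - u t| ≤ W) (T s : ℕ) :
    BddBelow {x | ∃ t : ℕ, T ≤ t ∧ s < t ∧ x = (u t - u s) / ((t : ℝ) - (s : ℝ))} := by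
  refine ⟨-W, ?_⟩
  rintro _ ⟨t, -, hst, rfl⟩
  rw [le_div_iff₀ (sub_pos.mpr (by exact_mod_cast hst))]
  linarith [sub_mul_le_of_abs_succ_sub_le hW hst.le]

lemma supportLine_self : supportLine u T s s = u s := by
  simp [supportLine]

lemma supportLine_le (hW : ∀ t, |u (t + 1) - u t| ≤ W) {t : ℕ} (hT : T ≤ t) (hst : s < t) :
    supportLine u T s t ≤ u t := by
  have h : slopeInf u T s ≤ (u t - u s) / ((t : ℝ) - s) :=
    csInf_le (bddBelow_slopes hW T s) ⟨t, hT, hst, rfl⟩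
  rw [le_div_iff₀ (sub_pos.mpr (by exact_mod_cast hst))] at h
  unfold supportLine
  linarith

lemma le_slopeInf {c : ℝ} (h : ∀ t : ℕ, T ≤ t → s < t → u s + ((t : ℝ) - s) * c ≤ u t) :
    c ≤ slopeInf u T s := by
  refine le_csInf ⟨_, max T (s + 1), le_max_left _ _, by omega, rfl⟩ ?_
  rintro _ ⟨t, hT, hst, rfl⟩
  rw [le_div_iff₀ (sub_pos.mpr (by exact_mod_cast hst))]
  linarith [h t hT hst]

lemma exists_margin_of_lt_supportLine (hW : ∀ t, |u (t + 1) - u t| ≤ W) {t : ℕ}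
    (hmin : supportLine u T s T ≤ supportLine u T t T) (htT : t < T)
    (hlt : u t < supportLine u T s t) :
    ∃ c > 0, ∀ r : ℕ, T ≤ r → supportLine u T s r + c * ((r : ℝ) - T) ≤ u r := by
  have hTt : (0 : ℝ) < (T : ℝ) - t := sub_pos.mpr (by exact_mod_cast htT)
  set c := (supportLine u T s t - u t) / ((T : ℝ) - t) with hc_def
  have hgap : supportLine u T s t - u t = c * ((T : ℝ) - t) := by
    rw [hc_def, div_mul_cancel₀ _ hTt.ne']
  have hslope : slopeInf u T s + c ≤ slopeInf u T t := by
    refine le_of_mul_le_mul_left ?_ hTt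
    unfold supportLine at hmin hgap
    linarith
  refine ⟨c, div_pos (by linarith) hTt, fun r hTr => ?_⟩
  have htr : (0 : ℝ) ≤ (r : ℝ) - t := by
    have : (t : ℝ) < r := by exact_mod_cast htT.trans_le hTr
    linarith
  have hr := supportLine_le hW hTr (htT.trans_le hTr)
  have := mul_le_mul_of_nonneg_left hslope htr
  unfold supportLine at hr hgap ⊢
  linarith

lemma lt_and_le_supportLine_of_margin {c : ℝ} (hsT : s ≤ T) (hc : 0 < c)
    (h : ∀ r : ℕ, T ≤ r → supportLine u T s r + c * ((r : ℝ) - T) ≤ u r) :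
    s < T ∧ u T ≤ supportLine u T s T := by
  rcases hsT.lt_or_eq with hsT | rfl
  · refine ⟨hsT, ?_⟩
    by_contra! he
    have hsT' : (s : ℝ) ≤ T := by exact_mod_cast hsT.le
    have hk : (0 : ℝ) < (T : ℝ) + 1 - s := by linarith
    set c₀ := min (u T - supportLine u T s T) c / ((T : ℝ) + 1 - s) with hc₀_def
    have hc₀ : 0 < c₀ := div_pos (lt_min (by linarith) hc) hk
    have hc₀k : c₀ * ((T : ℝ) + 1 - s) = min (u T - supportLine u T s T) c := by
      rw [hc₀_def, div_mul_cancel₀ _ hk.ne']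
    have hc₀e : c₀ * ((T : ℝ) + 1 - s) ≤ u T - supportLine u T s T := hc₀k ▸ min_le_left _ _
    have hc₀c : c₀ * ((T : ℝ) + 1 - s) ≤ c := hc₀k ▸ min_le_right _ _
    -- `c₀` is small enough that `u r` exceeds the line by `c₀ * (r - s)` both at `r = T`
    -- (where the excess is `u T - supportLine u T s T`) and at `r > T` (where it is `c * (r - T)`)
    have hbad : slopeInf u T s + c₀ ≤ slopeInf u T s := le_slopeInf fun r hTr _ => by
      rcases hTr.eq_or_lt with rfl | hTr
      · unfold supportLine at hc₀e
        linarith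
      · have h1 : (1 : ℝ) ≤ (r : ℝ) - T := by
          have : (T : ℝ) + 1 ≤ r := by exact_mod_cast hTr
          linarith
        have h2 : (0 : ℝ) ≤ ((T : ℝ) - s) * c₀ := mul_nonneg (by linarith) hc₀.le
        have h3 := mul_le_mul_of_nonneg_left hc₀c (by linarith : (0 : ℝ) ≤ (r : ℝ) - T)
        have h4 := mul_le_mul_of_nonneg_left h1 h2
        have hr := h r hTr.le
        unfold supportLine at hr
        linarith
    linarith
  · have : slopeInf u s s + c ≤ slopeInf u s s := le_slopeInf fun r hTr _ => by
      have hr := h r hTr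
      unfold supportLine at hr
      linarith
    linarith

theorem exists_supportLine_le (hW : ∀ t, |u (t + 1) - u t| ≤ W) (T : ℕ) :
    ∃ t₁ ≤ T, ∀ t : ℕ, supportLine u T t₁ t ≤ u t := by
  classical
  let IsMinimiser : ℕ → Prop := fun s => ∀ s' ≤ T, supportLine u T s T ≤ supportLine u T s' T
  obtain ⟨s₀, hs₀, hmin₀⟩ := (Finset.Iic T).exists_min_image (fun s => supportLine u T s T)
    ⟨T, Finset.mem_Iic.2 le_rfl⟩
  set t₁ := Nat.findGreatest IsMinimiser T
  have ht₁ : IsMinimiser t₁ := Nat.findGreatest_spec (Finset.mem_Iic.1 hs₀)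
    fun s' hs' => hmin₀ s' (Finset.mem_Iic.2 hs')
  have ht₁T : t₁ ≤ T := Nat.findGreatest_le T
  refine ⟨t₁, ht₁T, fun t => ?_⟩
  by_contra! hlt
  have htT : t < T := by
    by_contra! hTt
    rcases (ht₁T.trans hTt).lt_or_eq with ht₁t | rfl
    · exact (supportLine_le hW hTt ht₁t).not_gt hlt
    · exact hlt.ne supportLine_self.symm
  obtain ⟨c, hc, hmargin⟩ := exists_margin_of_lt_supportLine hW (ht₁ t htT.le) htT hlt
  obtain ⟨ht₁T', huT⟩ := lt_and_le_supportLine_of_margin ht₁T hc hmargin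
  have hT : IsMinimiser T := fun s' hs' => by
    rw [supportLine_self]
    exact huT.trans (ht₁ s' hs')
  exact (Nat.le_findGreatest le_rfl hT).not_gt ht₁T'

lemma csInf_chordSet_le_supportLine (hbdd : BddBelow (chordSet u T)) (hs : s ≤ T) :
    sInf (chordSet u T) ≤ supportLine u T s T := by
  rcases hs.lt_or_eq with hs | rfl
  · have hTs : (0 : ℝ) < (T : ℝ) - s := sub_pos.mpr (by exact_mod_cast hs)
    set m := sInf (chordSet u T)
    have hslope : (m - u s) / ((T : ℝ) - s) ≤ slopeInf u T s := le_slopeInf fun t hTt hst => by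
      have hts : (0 : ℝ) < (t : ℝ) - s := sub_pos.mpr (by exact_mod_cast hst)
      have hm : m ≤ (u s * ((t : ℝ) - T) + u t * ((T : ℝ) - s)) / ((t : ℝ) - s) :=
        csInf_le hbdd ⟨s, t, hs.le, hTt, Or.inr ⟨hst, rfl⟩⟩
      rw [le_div_iff₀ hts] at hm
      rw [mul_div_assoc', ← le_sub_iff_add_le', div_le_iff₀ hTs]
      linarith
    have := mul_le_mul_of_nonneg_left hslope hTs.le
    rw [mul_div_cancel₀ _ hTs.ne'] at this
    unfold supportLine
    linarith
  · rw [supportLine_self]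
    exact csInf_le hbdd ⟨s, s, le_rfl, le_rfl, Or.inl ⟨rfl, rfl⟩⟩

end SupportLine

section Value

variable {u : ℕ → ℝ} {T : ℕ}

lemma mul_add_mul_mem_valSet {a b : ℕ} {p q : ℝ} (hp : 0 ≤ p) (hq : 0 ≤ q) (hpq : p + q = 1)
    (hT : a * p + b * q = (T : ℝ)) : u a * p + u b * q ∈ valSet u T := by
  have key : ∀ v : ℕ → ℝ, HasSum (fun n => v n * ((if n = a then p else 0) +
      (if n = b then q else 0))) (v a * p + v b * q) := fun v => by
    convert (hasSum_ite_eq a (v a * p)).add (hasSum_ite_eq b (v b * q)) using 2 with n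
    split_ifs <;> subst_vars <;> ring
  refine ⟨_, ⟨fun n => by positivity, ?_, ?_, (key _).summable⟩, (key u).summable, ?_, ?_⟩
  · simpa using (key fun _ => 1).summable
  · simpa [hpq] using (key fun _ => 1).tsum_eq
  · rw [expTime, (key _).tsum_eq, hT]
  · rw [expUtil, (key u).tsum_eq]

lemma self_mem_valSet : u T ∈ valSet u T := by
  simpa using mul_add_mul_mem_valSet (u := u) (a := T) (b := T) zero_le_one le_rfl (by norm_num)
    (by simp)

lemma chordSet_subset_valSet : chordSet u T ⊆ valSet u T := by
  rintro x ⟨s₁, s₂, hs₁, hs₂, ⟨-, rfl⟩ | ⟨hlt, rfl⟩⟩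
  · exact self_mem_valSet
  have hd : (0 : ℝ) < (s₂ : ℝ) - s₁ := sub_pos.mpr (by exact_mod_cast hlt)
  have hs₁' : (s₁ : ℝ) ≤ T := by exact_mod_cast hs₁
  have hs₂' : (T : ℝ) ≤ s₂ := by exact_mod_cast hs₂
  convert mul_add_mul_mem_valSet (u := u) (a := s₁) (b := s₂)
    (div_nonneg (sub_nonneg.2 hs₂') hd.le) (div_nonneg (sub_nonneg.2 hs₁') hd.le) ?_ ?_ using 1
  · field_simp
  · field_simp
    ring
  · field_simp
    ring

lemma le_of_mem_valSet {a b x₀ x : ℝ} (h : ∀ t : ℕ, a + ((t : ℝ) - x₀) * b ≤ u t)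
    (hx : x ∈ valSet u T) : a + ((T : ℝ) - x₀) * b ≤ x := by
  obtain ⟨δ, ⟨hδ0, hδ, hδ1, hδt⟩, huδ, hδT, rfl⟩ := hx
  have hmass : HasSum δ 1 := hδ1 ▸ hδ.hasSum
  have hmean : HasSum (fun t : ℕ => (t : ℝ) * δ t) T := hδT ▸ hδt.hasSum
  have hline : HasSum (fun t : ℕ => (a + ((t : ℝ) - x₀) * b) * δ t) (a + ((T : ℝ) - x₀) * b) := by
    have hsplit : (fun t : ℕ => (a + ((t : ℝ) - x₀) * b) * δ t) =
        fun t => (a - x₀ * b) * δ t + b * ((t : ℝ) * δ t) := by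
      ext t
      ring
    rw [hsplit, show a + ((T : ℝ) - x₀) * b = (a - x₀ * b) * 1 + b * T by ring]
    exact (hmass.mul_left _).add (hmean.mul_left b)
  exact hasSum_le (fun t => mul_le_mul_of_nonneg_right (h t) (hδ0 t)) hline huδ.hasSum

end Value

/-- Geometric interpretation: there is a left-minimizer `t₁ ≤ T` such that,
with `ν = slopeInf u T t₁` and `f_u(t) = u t₁ + (t - t₁)·ν`, the sequence `u`
lies above the line `f_u`, and `val u T = f_u(T)`.  Moreover,
`val u T = min_{0 ≤ s₁ ≤ T} inf_{s₂ ≥ T} (u s₁·(s₂ - T) + u s₂·(T - s₁))/(s₂ - s₁)`,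
where the degenerate term `s₁ = s₂ = T` is interpreted as `u T`. -/
theorem geometric_interpretation
    (u : ℕ → ℝ) (W : ℝ) (hW : ∀ t, |u (t + 1) - u t| ≤ W) (T : ℕ) :
    (∃ t₁ : ℕ, t₁ ≤ T ∧
      (∀ t : ℕ, u t₁ + ((t : ℝ) - (t₁ : ℝ)) * slopeInf u T t₁ ≤ u t) ∧
      val u T = u t₁ + ((T : ℝ) - (t₁ : ℝ)) * slopeInf u T t₁) ∧
    val u T = sInf {x | ∃ s₁ s₂ : ℕ, s₁ ≤ T ∧ T ≤ s₂ ∧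
      ((s₁ = s₂ ∧ x = u T) ∨
        (s₁ < s₂ ∧
          x = (u s₁ * ((s₂ : ℝ) - (T : ℝ)) + u s₂ * ((T : ℝ) - (s₁ : ℝ))) /
                ((s₂ : ℝ) - (s₁ : ℝ))))} := by
  obtain ⟨t₁, ht₁T, hline⟩ := exists_supportLine_le hW T
  have hbdd : BddBelow (valSet u T) := ⟨_, fun _ => le_of_mem_valSet hline⟩
  have hchord : (chordSet u T).Nonempty := ⟨u T, T, T, le_rfl, le_rfl, Or.inl ⟨rfl, rfl⟩⟩
  have hlow : supportLine u T t₁ T ≤ val u T := le_csInf ⟨u T, self_mem_valSet⟩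
    fun _ => le_of_mem_valSet hline
  have hmid : val u T ≤ sInf (chordSet u T) := csInf_le_csInf hbdd hchord chordSet_subset_valSet
  have hup : sInf (chordSet u T) ≤ supportLine u T t₁ T :=
    csInf_chordSet_le_supportLine (hbdd.mono chordSet_subset_valSet) ht₁T
  exact ⟨⟨t₁, ht₁T, hline, le_antisymm (hmid.trans hup) hlow⟩,
    le_antisymm hmid (hup.trans hlow)⟩
end

section
/- Let u : ℕ → ℝ be a utility sequence with |u_{t+1} − u_t| ≤ W for all t for some constant W, and let T ∈ ℕ. Then val(u,T) = inf { y ∈ ℝ | (T, y) ∈ convexHull { (t, y) ∈ ℝ × ℝ | t ∈ ℕ, y ≥ u_t } }, i.e., the value of the sequence equals the intersection of the vertical line at T with the lower boundary of the convex hull of the region above the utility sequence. -/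
open scoped BigOperators

/-! The Lipschitz bound gives `u t ≥ u 0 - W t`, so both infima are finite. The pairs `(x, y)` for
which some stopping-time distribution of expected time `x` has expected utility at most `y` form
a convex set containing the supergraph (use point masses), hence the hull; this gives
`val u T ≤ y` for every point `(T, y)` of the hull. Conversely, truncate `δ` at a time `N` beyond
which the tail contributes time `s` with `2 W s < ε`, and replace the tail, of mass `m`, by the point
`(s / m, u 0 + W s / m)`, which lies on a segment between two points of the supergraph. This
keeps the expected time and, as `u t ≥ u 0 - W t` on the tail, raises the utility by at most
`2 W s`. -/

def supergraph (u : ℕ → ℝ) : Set (ℝ × ℝ) := {q | ∃ t : ℕ, q.1 = t ∧ u t ≤ q.2}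

def achievable (u : ℕ → ℝ) : Set (ℝ × ℝ) :=
  {p | ∃ δ, IsStopDist δ ∧ (Summable fun t => u t * δ t) ∧ expTime δ = p.1 ∧ expUtil u δ ≤ p.2}

theorem abs_sub_zero_le_mul_of_abs_succ_sub_le {u : ℕ → ℝ} {W : ℝ}
    (hW : ∀ t, |u (t + 1) - u t| ≤ W) (t : ℕ) : |u t - u 0| ≤ W * t := by
  have := dist_le_range_sum_of_dist_le (f := u) t (d := fun _ => W) fun _ => by
    rw [dist_comm, Real.dist_eq]; exact hW _
  simpa [Real.dist_eq, abs_sub_comm, mul_comm] using this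

theorem mul_add_mul_le_of_hasSum {ι : Type*} {f x y : ι → ℝ} {a b M X Y : ℝ}
    (hle : ∀ i, a + b * x i ≤ y i) (hf : ∀ i, 0 ≤ f i) (hM : HasSum f M)
    (hX : HasSum (fun i => x i * f i) X) (hY : HasSum (fun i => y i * f i) Y) :
    a * M + b * X ≤ Y :=
  hasSum_le (fun i => by nlinarith [mul_le_mul_of_nonneg_right (hle i) (hf i)])
    ((hM.mul_left a).add (hX.mul_left b)) hY

theorem Convex.sum_add_smul_mem {𝕜 E ι : Type*} [Field 𝕜] [LinearOrder 𝕜] [IsStrictOrderedRing 𝕜]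
    [AddCommGroup E] [Module 𝕜 E] {s : Set E} (hs : Convex 𝕜 s) {t : Finset ι} {w : ι → 𝕜}
    {z : ι → E} {c : 𝕜} {q : E} (hw : ∀ i ∈ t, 0 ≤ w i) (hc : 0 ≤ c)
    (h1 : ∑ i ∈ t, w i + c = 1) (hz : ∀ i ∈ t, z i ∈ s) (hq : q ∈ s) :
    ∑ i ∈ t, w i • z i + c • q ∈ s := by
  have := hs.sum_mem (t := t.insertNone) (w := fun o => o.elim c w) (z := fun o => o.elim q z)
    (Finset.forall_mem_insertNone.2 ⟨hc, hw⟩) (by rwa [Finset.sum_insertNone, add_comm])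
    (Finset.forall_mem_insertNone.2 ⟨hq, hz⟩)
  rwa [Finset.sum_insertNone, add_comm] at this

namespace IsStopDist

variable {δ : ℕ → ℝ}

theorem hasSum_one (hδ : IsStopDist δ) : HasSum δ 1 := hδ.2.2.1 ▸ hδ.2.1.hasSum

theorem hasSum_expTime (hδ : IsStopDist δ) : HasSum (fun t : ℕ => (t : ℝ) * δ t) (expTime δ) :=
  hδ.2.2.2.hasSum

theorem of_hasSum {X : ℝ} (h0 : ∀ t, 0 ≤ δ t) (h1 : HasSum δ 1)
    (hX : HasSum (fun t : ℕ => (t : ℝ) * δ t) X) : IsStopDist δ :=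
  ⟨h0, h1.summable, h1.tsum_eq, hX.summable⟩

theorem hasSum_mul_single (x : ℕ → ℝ) (t : ℕ) :
    HasSum (fun s => x s * (Pi.single t 1 : ℕ → ℝ) s) (x t) := by
  simpa using hasSum_single (f := fun s => x s * (Pi.single t 1 : ℕ → ℝ) s) t
    fun s hs => by simp [hs]

theorem single (t : ℕ) : IsStopDist (Pi.single t 1) :=
  of_hasSum (fun s => by by_cases h : s = t <;> simp [h]) (hasSum_pi_single t 1)
    (hasSum_mul_single _ t)

end IsStopDist

section

variable {u : ℕ → ℝ} {W : ℝ}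

theorem convex_achievable : Convex ℝ (achievable u) := by
  rintro p ⟨δ, hδ, hδu, hδT, hδU⟩ q ⟨η, hη, hηu, hηT, hηU⟩ a b ha hb hab
  have combo : ∀ {x : ℕ → ℝ} {A B : ℝ}, HasSum (fun t => x t * δ t) A →
      HasSum (fun t => x t * η t) B →
      HasSum (fun t => x t * (a * δ t + b * η t)) (a * A + b * B) := fun hA hB => by
    simpa only [mul_add, mul_left_comm] using (hA.mul_left a).add (hB.mul_left b)
  have hT := combo hδ.hasSum_expTime hη.hasSum_expTime
  have hU := combo hδu.hasSum hηu.hasSum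
  refine ⟨fun t => a * δ t + b * η t,
    .of_hasSum (fun t => by have := hδ.1 t; have := hη.1 t; positivity)
      (by simpa [hab] using (hδ.hasSum_one.mul_left a).add (hη.hasSum_one.mul_left b)) hT,
    hU.summable, ?_, ?_⟩
  · rw [expTime, hT.tsum_eq, hδT, hηT]; rfl
  · rw [expUtil, hU.tsum_eq, ← expUtil, ← expUtil]
    simpa using add_le_add (mul_le_mul_of_nonneg_left hδU ha) (mul_le_mul_of_nonneg_left hηU hb)

theorem supergraph_subset_achievable : supergraph u ⊆ achievable u := by
  rintro q ⟨t, hqt, ht⟩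
  refine ⟨_, .single t, (IsStopDist.hasSum_mul_single u t).summable,
    (IsStopDist.hasSum_mul_single _ t).tsum_eq.trans hqt.symm, ?_⟩
  rwa [expUtil, (IsStopDist.hasSum_mul_single u t).tsum_eq]

theorem convexHull_supergraph_subset_achievable : convexHull ℝ (supergraph u) ⊆ achievable u :=
  convexHull_min supergraph_subset_achievable convex_achievable

theorem sub_mul_expTime_le_expUtil (hW : ∀ t, |u (t + 1) - u t| ≤ W) {δ : ℕ → ℝ}
    (hδ : IsStopDist δ) (hu : Summable fun t => u t * δ t) :
    u 0 - W * expTime δ ≤ expUtil u δ := by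
  have := mul_add_mul_le_of_hasSum (a := u 0) (b := -W)
    (fun t => by linarith [(abs_le.1 (abs_sub_zero_le_mul_of_abs_succ_sub_le hW t)).1])
    hδ.1 hδ.hasSum_one hδ.hasSum_expTime hu.hasSum
  rw [expUtil]
  linarith

theorem mk_add_mul_mem_convexHull_supergraph (hW : ∀ t, |u (t + 1) - u t| ≤ W) {x : ℝ}
    (hx : 0 ≤ x) : (x, u 0 + W * x) ∈ convexHull ℝ (supergraph u) := by
  have hpt : ∀ n : ℕ, ((n : ℝ), u 0 + W * n) ∈ convexHull ℝ (supergraph u) := fun n =>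
    subset_convexHull ℝ _
      ⟨n, rfl, by linarith [(abs_le.1 (abs_sub_zero_le_mul_of_abs_succ_sub_le hW n)).2]⟩
  have := (convex_convexHull ℝ _).add_smul_sub_mem (hpt ⌊x⌋₊) (hpt (⌊x⌋₊ + 1)) (t := x - ⌊x⌋₊)
    ⟨sub_nonneg.2 (Nat.floor_le hx), by linarith [Nat.lt_floor_add_one x]⟩
  convert this using 1
  ext
  · simp
  · simp only [Nat.cast_add, Nat.cast_one, Prod.mk_sub_mk, add_sub_add_left_eq_sub, Prod.smul_mk,
      smul_eq_mul, Prod.mk_add_mk]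
    ring

theorem exists_mem_convexHull_supergraph_le_expUtil_add (hW : ∀ t, |u (t + 1) - u t| ≤ W)
    {δ : ℕ → ℝ} (hδ : IsStopDist δ) (hu : Summable fun t => u t * δ t) {ε : ℝ} (hε : 0 < ε) :
    ∃ y ≤ expUtil u δ + ε, (expTime δ, y) ∈ convexHull ℝ (supergraph u) := by
  obtain ⟨N, hN⟩ := (((tendsto_sum_nat_add fun t : ℕ => (t : ℝ) * δ t).const_mul (2 * W)).eventually
    (gt_mem_nhds (by simpa using hε))).exists
  set m := ∑' k, δ (k + N)
  set s := ∑' k, ((k + N : ℕ) : ℝ) * δ (k + N)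
  set e := ∑' k, u (k + N) * δ (k + N)
  have hmS : HasSum (fun k => δ (k + N)) m := ((summable_nat_add_iff N).2 hδ.hasSum_one.summable).hasSum
  have hsS : HasSum (fun k => ((k + N : ℕ) : ℝ) * δ (k + N)) s :=
    ((summable_nat_add_iff N).2 hδ.hasSum_expTime.summable).hasSum
  have heS : HasSum (fun k => u (k + N) * δ (k + N)) e :=
    ((summable_nat_add_iff N).2 hu).hasSum
  have hmass : ∑ t ∈ Finset.range N, δ t + m = 1 :=
    (hδ.hasSum_one.summable.sum_add_tsum_nat_add N).trans hδ.hasSum_one.tsum_eq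
  have htime : ∑ t ∈ Finset.range N, (t : ℝ) * δ t + s = expTime δ :=
    hδ.hasSum_expTime.summable.sum_add_tsum_nat_add N
  have hutil : ∑ t ∈ Finset.range N, u t * δ t + e = expUtil u δ := hu.sum_add_tsum_nat_add N
  have hm0 : 0 ≤ m := tsum_nonneg fun k => hδ.1 _
  have hs0 : 0 ≤ s := tsum_nonneg fun k => mul_nonneg (Nat.cast_nonneg _) (hδ.1 _)
  have hms : m * (s / m) = s := by
    rcases eq_or_ne m 0 with h | h
    -- `s / 0 = 0` is harmless: a tail of mass zero vanishes, and so does its time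
    · have : (fun k => δ (k + N)) = 0 :=
        (hasSum_zero_iff_of_nonneg fun k => hδ.1 _).1 (h ▸ hmS)
      simp [h, s, congrFun this]
    · exact mul_div_cancel₀ s h
  have htail : u 0 * m - W * s ≤ e := by
    have := mul_add_mul_le_of_hasSum (a := u 0) (b := -W) (x := fun k => ((k + N : ℕ) : ℝ))
      (fun k => by linarith [(abs_le.1 (abs_sub_zero_le_mul_of_abs_succ_sub_le hW (k + N))).1])
      (fun k => hδ.1 _) hmS hsS heS
    linarith
  refine ⟨∑ t ∈ Finset.range N, u t * δ t + (u 0 * m + W * s), by linarith, ?_⟩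
  have := (convex_convexHull ℝ (supergraph u)).sum_add_smul_mem (w := δ)
    (z := fun t => ((t : ℝ), u t)) (fun t _ => hδ.1 t) hm0 hmass
    (fun t _ => subset_convexHull ℝ _ ⟨t, rfl, le_rfl⟩)
    (mk_add_mul_mem_convexHull_supergraph hW (div_nonneg hs0 hm0))
  convert this using 1
  ext
  · simp [Prod.fst_sum, mul_comm, hms, ← htime]
  · simp only [Prod.smul_mk, smul_eq_mul, mul_comm, Prod.snd_add, Prod.snd_sum, add_right_inj]
    linear_combination W * hms.symm

end

/-- Convex-hull interpretation: the value of the sequence `u` equals the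
infimum of the intersection of the vertical line at `T` with the convex hull
of the region above the utility sequence. -/
theorem convexHull_interpretation
    (u : ℕ → ℝ) (W : ℝ) (hW : ∀ t, |u (t + 1) - u t| ≤ W) (T : ℕ) :
    val u T =
      sInf {y : ℝ | ((T : ℝ), y) ∈
        convexHull ℝ {q : ℝ × ℝ | ∃ t : ℕ, q.1 = (t : ℝ) ∧ u t ≤ q.2}} := by
  set A := {x | ∃ δ : ℕ → ℝ, IsStopDist δ ∧ (Summable fun t => u t * δ t) ∧
    expTime δ = (T : ℝ) ∧ x = expUtil u δ}
  set B := {y : ℝ | ((T : ℝ), y) ∈ convexHull ℝ (supergraph u)}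
  have hAne : A.Nonempty := ⟨_, _, .single T, (IsStopDist.hasSum_mul_single u T).summable,
    (IsStopDist.hasSum_mul_single _ T).tsum_eq, rfl⟩
  have hBne : B.Nonempty := ⟨u T, subset_convexHull ℝ _ ⟨T, rfl, le_rfl⟩⟩
  have hAbdd : BddBelow A := ⟨u 0 - W * T, by
    rintro _ ⟨δ, hδ, hu, hT, rfl⟩
    exact hT ▸ sub_mul_expTime_le_expUtil hW hδ hu⟩
  have hBA : ∀ y ∈ B, ∃ x ∈ A, x ≤ y := fun y hy => by
    obtain ⟨δ, hδ, hu, hT, hy⟩ := convexHull_supergraph_subset_achievable hy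
    exact ⟨_, ⟨δ, hδ, hu, hT, rfl⟩, hy⟩
  have hBbdd : BddBelow B := by
    obtain ⟨b, hb⟩ := hAbdd
    exact ⟨b, fun y hy => by obtain ⟨x, hx, hxy⟩ := hBA y hy; exact (hb hx).trans hxy⟩
  refine le_antisymm (le_csInf hBne fun y hy => ?_) (le_csInf hAne ?_)
  · obtain ⟨x, hx, hxy⟩ := hBA y hy
    exact (csInf_le hAbdd hx).trans hxy
  · rintro _ ⟨δ, hδ, hu, hT, rfl⟩
    refine le_of_forall_pos_le_add fun ε hε => ?_
    obtain ⟨y, hy, hyB⟩ := exists_mem_convexHull_supergraph_le_expUtil_add hW hδ hu hε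
    rw [hT] at hyB
    exact (csInf_le hBbdd hyB).trans hy
end

section
/- Let T ∈ ℕ and let ρ be an infinite path in a weighted graph G inducing utility sequence u, with ν = min_{0 ≤ t_1 ≤ T} inf_{t_2 ≥ T} (u_{t_2} − u_{t_1})/(t_2 − t_1) finite. If every simple cycle occurring in the cycle decomposition of ρ has average weight strictly smaller than ν, then min_{0 ≤ t_1 ≤ T} inf_{t_2 ≥ T} (u_{t_2} − u_{t_1})/(t_2 − t_1) < ν, a contradiction; hence the cycle decomposition of ρ contains a simple cycle C with average weight M_C ≥ ν. -/
open scoped BigOperators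

/-- The sum of the weights of the first `n` edges of the infinite path with
vertex sequence `p` in the weighted graph with weight function `w`. -/
noncomputable def sumW {V : Type*} (w : V → V → ℤ) (p : ℕ → V) (n : ℕ) : ℝ :=
  ∑ k ∈ Finset.range n, (w (p k) (p (k + 1)) : ℝ)

/-- The utility sequence induced by the path with vertex sequence `p`:
`u i = ∑_{k ≤ i} w(e_k)`. -/
noncomputable def pathUtil {V : Type*} (w : V → V → ℤ) (p : ℕ → V) : ℕ → ℝ :=
  fun i => sumW w p (i + 1)

/-- The value of the infinite path with vertex sequence `p` under adversarial
stopping-time distributions with expected time `T`. -/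
noncomputable def pathVal {V : Type*} (w : V → V → ℤ) (p : ℕ → V) (T : ℕ) : ℝ :=
  val (pathUtil w p) T

/-- `p` is (the vertex sequence of) an infinite path from `v₀` in the graph
with edge relation `E`. -/
def IsPath {V : Type*} (E : V → V → Prop) (v₀ : V) (p : ℕ → V) : Prop :=
  p 0 = v₀ ∧ ∀ i, E (p i) (p (i + 1))

/-- `ν = min_{0 ≤ t₁ ≤ T} inf_{t₂ ≥ T} (u t₂ - u t₁)/(t₂ - t₁)` for the
utility sequence `u` induced by the path `p`. -/
noncomputable def nuPath {V : Type*} (w : V → V → ℤ) (p : ℕ → V) (T : ℕ) : ℝ :=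
  sInf {x | ∃ t₁ t₂ : ℕ, t₁ ≤ T ∧ T ≤ t₂ ∧ t₁ < t₂ ∧
    x = (pathUtil w p t₂ - pathUtil w p t₁) / ((t₂ : ℝ) - (t₁ : ℝ))}

/-- One step of the stack-based cycle decomposition: push vertex `v` onto the
stack `s` (head of the list = top of the stack); if `v` already occurs in the
stack, the closed simple cycle is removed from the stack and emitted
(given in path order, from the old occurrence of `v` up to the top of the
stack and back to `v`). -/
def stackStep {V : Type*} [DecidableEq V] (s : List V) (v : V) :
    List V × Option (List V) :=
  if v ∈ s then
    (v :: s.drop (s.idxOf v + 1),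
      some ((s.take (s.idxOf v + 1)).reverse ++ [v]))
  else (v :: s, none)

/-- The successive stack contents while processing the vertices of the
infinite path `p`. -/
def stackSeq {V : Type*} [DecidableEq V] (p : ℕ → V) : ℕ → List V
  | 0 => [p 0]
  | i + 1 => (stackStep (stackSeq p i) (p (i + 1))).1

/-- The simple cycle `C` (as a list of vertices whose first and last entries
coincide) occurs in the cycle decomposition of the path `p`. -/
def InCycleDecomp {V : Type*} [DecidableEq V] (p : ℕ → V) (C : List V) : Prop :=
  ∃ i : ℕ, (stackStep (stackSeq p i) (p (i + 1))).2 = some C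

/-- The average weight `M_C = S_C / |C|` of a cycle given as a list of
vertices (with first = last vertex). -/
noncomputable def avgWeight {V : Type*} (w : V → V → ℤ) (C : List V) : ℝ :=
  (((C.zip C.tail).map (fun q => (w q.1 q.2 : ℝ))).sum) / ((C.length : ℝ) - 1)

/-!
Up to step `n`, the stack decomposition splits the first `n` edges of the path into the simple
cycles emitted so far and the current stack, an acyclic path on at most `|V|` vertices. There are
only finitely many simple cycles, so if all emitted ones had average weight below `ν`, a single
`μ < ν` would bound all of them, giving `u n ≤ μ n + O(1)`. Then the ratios
`(u t - u T) / (t - T)` are eventually below any number exceeding `μ`, which forces `ν ≤ μ`.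
-/

theorem Set.Finite.exists_lt_forall_le {ι α : Type*} [LinearOrder α] [TopologicalSpace α]
    [OrderTopology α] [DenselyOrdered α] [NoMinOrder α] {s : Set ι} (hs : s.Finite)
    {f : ι → α} {a : α} (h : ∀ i ∈ s, f i < a) : ∃ b < a, ∀ i ∈ s, f i ≤ b := by
  have hev : ∀ᶠ b in nhdsWithin a (Set.Iio a), ∀ i ∈ s, f i < b :=
    hs.eventually_all.2 fun i hi => nhdsWithin_le_nhds (eventually_gt_nhds (h i hi))
  obtain ⟨b, hb, hba⟩ := (hev.and self_mem_nhdsWithin).exists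
  exact ⟨b, hba, fun i hi => (hb i hi).le⟩

section EdgeSum

variable {V : Type*} (w : V → V → ℤ)

noncomputable def edgeSum : List V → ℝ
  | [] => 0
  | [_] => 0
  | a :: b :: l => w a b + edgeSum (b :: l)

@[simp] theorem edgeSum_nil : edgeSum w [] = 0 := rfl

@[simp] theorem edgeSum_singleton (a : V) : edgeSum w [a] = 0 := rfl

@[simp] theorem edgeSum_cons_cons (a b : V) (l : List V) :
    edgeSum w (a :: b :: l) = w a b + edgeSum w (b :: l) := rfl

theorem sum_map_zip_tail_eq_edgeSum : ∀ l : List V,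
    ((l.zip l.tail).map fun q => (w q.1 q.2 : ℝ)).sum = edgeSum w l
  | [] | [_] => rfl
  | a :: b :: l => by
    simp [← sum_map_zip_tail_eq_edgeSum (b :: l)]

theorem edgeSum_append_cons : ∀ (l : List V) (x : V) (r : List V),
    edgeSum w (l ++ x :: r) = edgeSum w (l ++ [x]) + edgeSum w (x :: r)
  | [], _, _ => by simp
  | [a], x, r => by simp
  | a :: b :: l, x, r => by
    have ih := edgeSum_append_cons (b :: l) x r
    simp only [List.cons_append, edgeSum_cons_cons] at ih ⊢
    rw [ih]
    ring

theorem edgeSum_append_singleton {l : List V} {x : V} (hx : l.getLast? = some x) (y : V) :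
    edgeSum w (l ++ [y]) = edgeSum w l + w x y := by
  obtain ⟨l, rfl⟩ := List.getLast?_eq_some_iff.1 hx
  rw [List.append_assoc, List.singleton_append, edgeSum_append_cons]
  simp

theorem edgeSum_le_of_avgWeight_le {C : List V} {μ : ℝ}
    (hC : 2 ≤ C.length) (h : avgWeight w C ≤ μ) : edgeSum w C ≤ μ * (C.length - 1 : ℕ) := by
  have hpos : (0 : ℝ) < C.length - 1 := by
    rw [sub_pos, Nat.one_lt_cast]
    omega
  rwa [avgWeight, sum_map_zip_tail_eq_edgeSum, div_le_iff₀ hpos, ← Nat.cast_one,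
    ← Nat.cast_sub (by omega)] at h

end EdgeSum

section StackStep

variable {V : Type*} [DecidableEq V]

theorem stackStep_append_cons {a b : List V} {v : V} (ha : v ∉ a) :
    stackStep (a ++ v :: b) v = (v :: b, some (v :: a.reverse ++ [v])) := by
  have hidx : (a ++ v :: b).idxOf v = a.length := by
    simp [List.idxOf_append_of_notMem ha]
  simp [stackStep, hidx, List.take_append, List.drop_append]

theorem stackStep_cases {s : List V} (hs : s.Nodup) (v : V) :
    (v ∉ s ∧ stackStep s v = (v :: s, none)) ∨
      ∃ a b, s = a ++ v :: b ∧ stackStep s v = (v :: b, some (v :: a.reverse ++ [v])) := by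
  by_cases hv : v ∈ s
  · obtain ⟨a, b, rfl⟩ := List.append_of_mem hv
    have ha : v ∉ a := fun hva => (List.nodup_append.1 hs).2.2 v hva v (by simp) rfl
    exact Or.inr ⟨a, b, rfl, stackStep_append_cons ha⟩
  · exact Or.inl ⟨hv, if_neg hv⟩

theorem stackStep_fst_head? (s : List V) (v : V) : (stackStep s v).1.head? = some v := by
  unfold stackStep
  split_ifs <;> rfl

theorem List.Nodup.stackStep_fst {s : List V} (hs : s.Nodup) (v : V) :
    (stackStep s v).1.Nodup := by
  rcases stackStep_cases hs v with ⟨hv, hstep⟩ | ⟨a, b, rfl, hstep⟩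
  · rw [hstep]
    exact List.nodup_cons.2 ⟨hv, hs⟩
  · rw [hstep]
    exact hs.sublist (List.suffix_append a _).sublist

theorem List.Nodup.length_stackStep {s : List V} (hs : s.Nodup) (v : V) :
    s.length + 1 =
      (stackStep s v).2.elim 0 (fun C => C.length - 1) + (stackStep s v).1.length := by
  rcases stackStep_cases hs v with ⟨-, hstep⟩ | ⟨a, b, rfl, hstep⟩ <;>
    simp [hstep]
  omega

theorem List.Nodup.edgeSum_stackStep (w : V → V → ℤ) {s : List V} (hs : s.Nodup) {x : V}
    (hx : s.head? = some x) (v : V) :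
    edgeSum w s.reverse + w x v =
      (stackStep s v).2.elim 0 (edgeSum w) + edgeSum w (stackStep s v).1.reverse := by
  rcases stackStep_cases hs v with ⟨-, hstep⟩ | ⟨a, b, rfl, hstep⟩
  · rw [hstep, List.reverse_cons,
      edgeSum_append_singleton w (List.getLast?_reverse.trans hx)]
    simp
  · have hlast : (v :: a.reverse).getLast? = some x := by
      rw [← List.reverse_concat', List.getLast?_reverse, ← hx]
      cases a <;> simp
    rw [hstep, Option.elim_some, List.reverse_append, List.reverse_cons,
      List.append_assoc, List.singleton_append, edgeSum_append_cons,
      edgeSum_append_singleton w hlast]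
    ring

theorem List.Nodup.two_le_length_le_succ_of_stackStep_snd_eq_some {s : List V} (hs : s.Nodup)
    {v : V} {C : List V} (hC : (stackStep s v).2 = some C) :
    2 ≤ C.length ∧ C.length ≤ s.length + 1 := by
  rcases stackStep_cases hs v with ⟨-, hstep⟩ | ⟨a, b, rfl, hstep⟩ <;>
    simp only [hstep, reduceCtorEq, Option.some.injEq] at hC
  subst hC
  simp

end StackStep

section CycleDecomposition

variable {V : Type*} [DecidableEq V]

def emittedCycle (p : ℕ → V) (i : ℕ) : Option (List V) :=
  (stackStep (stackSeq p i) (p (i + 1))).2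

theorem stackSeq_head? (p : ℕ → V) : ∀ n, (stackSeq p n).head? = some (p n)
  | 0 => rfl
  | _ + 1 => stackStep_fst_head? _ _

theorem stackSeq_nodup (p : ℕ → V) : ∀ n, (stackSeq p n).Nodup
  | 0 => List.nodup_singleton _
  | n + 1 => (stackSeq_nodup p n).stackStep_fst _

theorem succ_eq_sum_emittedCycle_add_length (p : ℕ → V) (n : ℕ) :
    n + 1 = ∑ i ∈ Finset.range n, (emittedCycle p i).elim 0 (fun C => C.length - 1) +
      (stackSeq p n).length := by
  induction n with
  | zero => rfl
  | succ n ih =>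
    have hstep := (stackSeq_nodup p n).length_stackStep (p (n + 1))
    rw [Finset.sum_range_succ, emittedCycle, stackSeq]
    omega

theorem sumW_eq_sum_emittedCycle_add_edgeSum (w : V → V → ℤ) (p : ℕ → V) (n : ℕ) :
    sumW w p n = ∑ i ∈ Finset.range n, (emittedCycle p i).elim 0 (edgeSum w) +
      edgeSum w (stackSeq p n).reverse := by
  induction n with
  | zero => simp [sumW, stackSeq]
  | succ n ih =>
    have hstep := (stackSeq_nodup p n).edgeSum_stackStep w (stackSeq_head? p n) (p (n + 1))
    rw [sumW, Finset.sum_range_succ, ← sumW, ih, Finset.sum_range_succ, emittedCycle, stackSeq]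
    linarith

theorem two_le_length_le_of_emittedCycle_eq_some [Fintype V] {p : ℕ → V} {i : ℕ}
    {C : List V} (hC : emittedCycle p i = some C) :
    2 ≤ C.length ∧ C.length ≤ Fintype.card V + 1 := by
  obtain ⟨h2, hle⟩ := (stackSeq_nodup p i).two_le_length_le_succ_of_stackStep_snd_eq_some hC
  exact ⟨h2, hle.trans (Nat.succ_le_succ (stackSeq_nodup p i).length_le_card)⟩

theorem finite_setOf_inCycleDecomp [Fintype V] (p : ℕ → V) :
    {C | InCycleDecomp p C}.Finite :=
  (List.finite_length_le V _).subset fun _ ⟨_, hC⟩ =>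
    (two_le_length_le_of_emittedCycle_eq_some hC).2

theorem exists_sumW_le_of_emittedCycle [Fintype V] (w : V → V → ℤ) (p : ℕ → V) (μ : ℝ)
    (hμ : ∀ i C, emittedCycle p i = some C → edgeSum w C ≤ μ * (C.length - 1 : ℕ)) :
    ∃ B, ∀ n, sumW w p n ≤ μ * n + B := by
  obtain ⟨B, hB⟩ := ((List.finite_length_le V (Fintype.card V)).image
    fun l => edgeSum w l.reverse - μ * l.length + μ).bddAbove
  refine ⟨B, fun n => ?_⟩
  have hcycles : ∑ i ∈ Finset.range n, (emittedCycle p i).elim 0 (edgeSum w) ≤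
      μ * ∑ i ∈ Finset.range n, (((emittedCycle p i).elim 0 (fun C => C.length - 1) : ℕ) : ℝ) := by
    rw [Finset.mul_sum]
    refine Finset.sum_le_sum fun i _ => ?_
    cases hC : emittedCycle p i with
    | none => simp
    | some C => exact hμ i C hC
  have hlen : ∑ i ∈ Finset.range n, (((emittedCycle p i).elim 0 (fun C => C.length - 1) : ℕ) : ℝ)
      = n + 1 - (stackSeq p n).length := by
    rw [eq_sub_iff_add_eq, ← Nat.cast_sum]
    exact_mod_cast (succ_eq_sum_emittedCycle_add_length p n).symm
  have hstack := hB ⟨stackSeq p n, (stackSeq_nodup p n).length_le_card, rfl⟩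
  rw [hlen] at hcycles
  rw [sumW_eq_sum_emittedCycle_add_edgeSum]
  linarith

end CycleDecomposition

section Ratio

variable {V : Type*} {w : V → V → ℤ} {p : ℕ → V}

theorem le_pathUtil_sub {m : ℝ} (hm : ∀ a b, m ≤ w a b) {t₁ t₂ : ℕ} (h : t₁ ≤ t₂) :
    m * ((t₂ : ℝ) - t₁) ≤ pathUtil w p t₂ - pathUtil w p t₁ := by
  have hsum := Finset.card_nsmul_le_sum (Finset.Ico (t₁ + 1) (t₂ + 1))
    (fun k => (w (p k) (p (k + 1)) : ℝ)) m fun k _ => hm _ _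
  rw [Finset.sum_Ico_eq_sub _ (by omega), Nat.card_Ico, nsmul_eq_mul,
    Nat.cast_sub (by omega)] at hsum
  simp only [pathUtil, sumW]
  push_cast at hsum
  linarith

variable [Finite V]

theorem nuPath_le_div (w : V → V → ℤ) (p : ℕ → V) {T t : ℕ} (ht : T < t) :
    nuPath w p T ≤ (pathUtil w p t - pathUtil w p T) / ((t : ℝ) - T) := by
  -- the slopes must be bounded below, or `sInf` would return the junk value `0`
  obtain ⟨m, hm⟩ := (Set.finite_range fun q : V × V => (w q.1 q.2 : ℝ)).bddBelow
  refine csInf_le ⟨m, ?_⟩ ⟨T, t, le_rfl, ht.le, ht, rfl⟩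
  rintro _ ⟨t₁, t₂, -, -, h, rfl⟩
  rw [le_div_iff₀ (sub_pos.2 (Nat.cast_lt.2 h))]
  exact le_pathUtil_sub (fun a b => hm ⟨(a, b), rfl⟩) h.le

theorem nuPath_le_of_sumW_le (T : ℕ) {μ B : ℝ} (h : ∀ n, sumW w p n ≤ μ * n + B) :
    nuPath w p T ≤ μ := by
  set c := μ * (T + 1) + B - pathUtil w p T
  have hgap : ∀ N : ℕ, 1 ≤ N → nuPath w p T - μ ≤ c / N := by
    intro N hN
    have hN' : (0 : ℝ) < N := by exact_mod_cast hN
    have hν := nuPath_le_div w p (by omega : T < T + N)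
    have hu : pathUtil w p (T + N) ≤ μ * (T + N + 1) + B := by
      have := h (T + N + 1)
      push_cast at this
      exact this
    rw [show ((T + N : ℕ) : ℝ) - T = N by push_cast; ring, le_div_iff₀ hN'] at hν
    rw [le_div_iff₀ hN']
    linarith
  have := ge_of_tendsto (tendsto_const_div_atTop_nhds_zero_nat c)
    (Filter.eventually_atTop.2 ⟨1, hgap⟩)
  linarith

end Ratio

theorem exists_good_cycle_general
    {V : Type*} [Fintype V] [DecidableEq V]
    (w : V → V → ℤ)
    (T : ℕ) (p : ℕ → V) :
    ∃ C : List V, InCycleDecomp p C ∧ nuPath w p T ≤ avgWeight w C := by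
  by_contra! hbad
  obtain ⟨μ, hμν, hμ⟩ := (finite_setOf_inCycleDecomp p).exists_lt_forall_le hbad
  obtain ⟨B, hB⟩ := exists_sumW_le_of_emittedCycle w p μ fun i C hC =>
    edgeSum_le_of_avgWeight_le w (two_le_length_le_of_emittedCycle_eq_some hC).1 (hμ C ⟨i, hC⟩)
  exact (nuPath_le_of_sumW_le T hB).not_gt hμν

/-- Every infinite path contains, in its cycle decomposition, a (good) simple
cycle whose average weight is at least
`ν = min_{0 ≤ t₁ ≤ T} inf_{t₂ ≥ T} (u t₂ - u t₁)/(t₂ - t₁)`. -/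
theorem exists_good_cycle
    {V : Type*} [Fintype V] [DecidableEq V]
    (E : V → V → Prop) (w : V → V → ℤ)
    (T : ℕ) (v₀ : V) (p : ℕ → V) (hp : IsPath E v₀ p) :
    ∃ C : List V, InCycleDecomp p C ∧ nuPath w p T ≤ avgWeight w C :=
  exists_good_cycle_general w T p
end

section
/- Let T ∈ ℕ, and let ρ₁ and ρ_A be two finite paths in a weighted graph G of the same length and with the same end vertex. If ρ₁ is preferred to ρ_A (i.e., the sum of weights of ρ₁ is at least that of ρ_A, and the constraint φ_{ρ_A} implies the constraint φ_{ρ₁}), then for every finite path ρ_C with start(ρ_C) = end(ρ_A), the path ρ₁·ρ_C is preferred to the path ρ_A·ρ_C. -/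
/-
Concatenation with a common suffix `ρ_C` shifts every partial sum after the junction by the
same amount `∑ w(ρ₁) - ∑ w(ρ_A) ≥ 0`, while the partial sums before the junction are those of
`ρ₁` and `ρ_A` themselves. So the total-weight comparison is preserved, and the constraint
`φ_{ρ·ρ_C}` splits into `φ_ρ` and a family of lower bounds on `∑ w(ρ)`, each of which passes
from `ρ_A` to `ρ₁`.
-/

open scoped BigOperators

/-- The constraint `φ_ρ(M)` on the slope parameter `M` associated with the
finite path with vertex sequence `q` and `L` edges:
`⋀_{0 ≤ i < L} (u_i ≥ M·(i − T))` where `u_i = ∑_{k ≤ i} w(e_k)`. -/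
def PhiConstraint {V : Type*} (w : V → V → ℤ) (T : ℕ) (q : ℕ → V) (L : ℕ)
    (M : ℝ) : Prop :=
  ∀ i < L, M * ((i : ℝ) - (T : ℝ)) ≤ sumW w q (i + 1)

/-- The concatenation `ρ·ρ'` of the statement; at the junction it reads `p n`, not `q 0`. -/
def pathAppend {V : Type*} (p : ℕ → V) (n : ℕ) (q : ℕ → V) : ℕ → V :=
  fun i => if i ≤ n then p i else q (i - n)

section

variable {V : Type*} (w : V → V → ℤ)

lemma sumW_congr {p q : ℕ → V} {N : ℕ} (h : ∀ k ≤ N, p k = q k) :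
    sumW w p N = sumW w q N :=
  Finset.sum_congr rfl fun k hk => by
    rw [Finset.mem_range] at hk
    rw [h k hk.le, h (k + 1) hk]

lemma pathAppend_add {p q : ℕ → V} {n : ℕ} (hq : q 0 = p n) (j : ℕ) :
    pathAppend p n q (n + j) = q j := by
  rcases j with _ | j
  · simp [pathAppend, hq]
  · simp [pathAppend]

lemma sumW_pathAppend_of_le {p q : ℕ → V} {n N : ℕ} (hN : N ≤ n) :
    sumW w (pathAppend p n q) N = sumW w p N :=
  sumW_congr w fun _ hk => if_pos (hk.trans hN)

lemma sumW_pathAppend {p q : ℕ → V} {n : ℕ} (hq : q 0 = p n) (j : ℕ) :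
    sumW w (pathAppend p n q) (n + j) = sumW w p n + sumW w q j := by
  rw [sumW, Finset.sum_range_add, ← sumW, sumW_pathAppend_of_le w le_rfl]
  congr 1
  refine Finset.sum_congr rfl fun k _ => ?_
  rw [add_assoc, pathAppend_add hq, pathAppend_add hq]

lemma phiConstraint_pathAppend_iff {p q : ℕ → V} {n : ℕ} (hq : q 0 = p n) (T m : ℕ)
    (M : ℝ) :
    PhiConstraint w T (pathAppend p n q) (n + m) M ↔
      PhiConstraint w T p n M ∧
        ∀ j < m, M * ((n + j : ℕ) - (T : ℝ)) ≤ sumW w p n + sumW w q (j + 1) := by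
  constructor
  · intro h
    refine ⟨fun i hi => ?_, fun j hj => ?_⟩
    · rw [← sumW_pathAppend_of_le w hi]
      exact h i (by omega)
    · rw [← sumW_pathAppend w hq]
      exact h (n + j) (by omega)
  · rintro ⟨hp, hsuffix⟩ i hi
    rcases lt_or_ge i n with hin | hni
    · rw [sumW_pathAppend_of_le w hin]
      exact hp i hin
    · obtain ⟨j, rfl⟩ := Nat.exists_eq_add_of_le hni
      rw [add_assoc, sumW_pathAppend w hq]
      exact hsuffix j (by omega)

end

theorem preferred_extension_general
    {V : Type*}
    (w : V → V → ℤ) (T : ℕ)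
    (n : ℕ) (p₁ pA : ℕ → V)
    (hend : p₁ n = pA n)
    (hprefSum : sumW w pA n ≤ sumW w p₁ n)
    (hprefPhi : ∀ M : ℝ, PhiConstraint w T pA n M → PhiConstraint w T p₁ n M)
    (m : ℕ) (pC : ℕ → V)
    (hstart : pC 0 = pA n) :
    sumW w (fun i => if i ≤ n then pA i else pC (i - n)) (n + m) ≤
      sumW w (fun i => if i ≤ n then p₁ i else pC (i - n)) (n + m) ∧
    ∀ M : ℝ,
      PhiConstraint w T (fun i => if i ≤ n then pA i else pC (i - n)) (n + m) M →
      PhiConstraint w T (fun i => if i ≤ n then p₁ i else pC (i - n)) (n + m) M := by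
  have hstart₁ : pC 0 = p₁ n := hstart.trans hend.symm
  constructor
  · change sumW w (pathAppend pA n pC) (n + m) ≤ sumW w (pathAppend p₁ n pC) (n + m)
    rw [sumW_pathAppend w hstart, sumW_pathAppend w hstart₁]
    linarith
  · intro M hA
    obtain ⟨hφA, hsuffix⟩ := (phiConstraint_pathAppend_iff w hstart T m M).1 hA
    exact (phiConstraint_pathAppend_iff w hstart₁ T m M).2
      ⟨hprefPhi M hφA, fun j hj => (hsuffix j hj).trans (by linarith)⟩

/-- If `ρ₁` is preferred to `ρ_A` (same length `n`, same end vertex, larger sum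
of weights, and `φ_{ρ_A}` implies `φ_{ρ₁}`), then for every path `ρ_C` starting
at their common end vertex, `ρ₁·ρ_C` is preferred to `ρ_A·ρ_C`. -/
theorem preferred_extension
    {V : Type*} [Fintype V]
    (E : V → V → Prop) (w : V → V → ℤ) (T : ℕ)
    (n : ℕ) (p₁ pA : ℕ → V)
    (hp₁ : ∀ i < n, E (p₁ i) (p₁ (i + 1)))
    (hpA : ∀ i < n, E (pA i) (pA (i + 1)))
    (hend : p₁ n = pA n)
    (hprefSum : sumW w pA n ≤ sumW w p₁ n)
    (hprefPhi : ∀ M : ℝ, PhiConstraint w T pA n M → PhiConstraint w T p₁ n M)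
    (m : ℕ) (pC : ℕ → V)
    (hpC : ∀ i < m, E (pC i) (pC (i + 1)))
    (hstart : pC 0 = pA n) :
    sumW w (fun i => if i ≤ n then pA i else pC (i - n)) (n + m) ≤
      sumW w (fun i => if i ≤ n then p₁ i else pC (i - n)) (n + m) ∧
    ∀ M : ℝ,
      PhiConstraint w T (fun i => if i ≤ n then pA i else pC (i - n)) (n + m) M →
      PhiConstraint w T (fun i => if i ≤ n then p₁ i else pC (i - n)) (n + m) M :=
  preferred_extension_general w T n p₁ pA hend hprefSum hprefPhi m pC hstart
end
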